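/- arXiv:1212.3841 — 3 statements merged into one kernel-verified Lean document; each statement's English description precedes it below -/
import Mathlib

section
/- The function S(x) = ln(ln x) + ∑_{n=1}^{∞} (ln x)^n / (n · n!) is well defined on (1, ∞) (the series converges absolutely for every x > 1) and is differentiable there with derivative S′(x) = 1 / ln x. -/
/-!
With `t = log x`, the series is `F t = ∑ tⁿ⁺¹ / ((n + 1) (n + 1)!)`, an entire power series whose
termwise derivative is `∑ tⁿ / (n + 1)! = (eᵗ - 1) / t`. By the chain rule the derivative of
`log (log x) + F (log x)` is `(1 + (x - 1)) / (x log x) = 1 / log x`.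
-/

open Real Nat

theorem summable_abs_pow_succ_div_succ_mul_factorial (t : ℝ) :
    Summable (fun n : ℕ => |t ^ (n + 1) / (((n : ℝ) + 1) * ((n + 1)! : ℝ))|) := by
  refine .of_nonneg_of_le (fun n => abs_nonneg _) (fun n => ?_)
    ((summable_nat_add_iff 1).mpr (summable_pow_div_factorial |t|))
  have hden : (0 : ℝ) < ((n : ℝ) + 1) * ((n + 1)! : ℝ) := by positivity
  rw [abs_div, abs_pow, abs_of_pos hden]
  exact div_le_div_of_nonneg_left (by positivity) (by positivity)
    (le_mul_of_one_le_left (by positivity) (by simp))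

theorem hasSum_pow_div_factorial_succ {t : ℝ} (ht : t ≠ 0) :
    HasSum (fun n : ℕ => t ^ n / ((n + 1)! : ℝ)) ((exp t - 1) / t) := by
  have hexp : HasSum (fun n : ℕ => t ^ (n + 1) / ((n + 1)! : ℝ)) (exp t - 1) := by
    simpa [exp_eq_exp_ℝ] using
      (hasSum_nat_add_iff' 1).mpr (NormedSpace.expSeries_div_hasSum_exp t)
  refine (hexp.div_const t).congr_fun fun n => ?_
  field_simp
  ring

theorem hasDerivAt_pow_succ_div_succ_mul_factorial (n : ℕ) (t : ℝ) :
    HasDerivAt (fun s : ℝ => s ^ (n + 1) / (((n : ℝ) + 1) * ((n + 1)! : ℝ)))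
      (t ^ n / ((n + 1)! : ℝ)) t := by
  refine ((hasDerivAt_pow (n + 1) t).div_const (((n : ℝ) + 1) * ((n + 1)! : ℝ))).congr_deriv ?_
  push_cast
  field_simp

theorem hasDerivAt_tsum_pow_succ_div_succ_mul_factorial (t : ℝ) :
    HasDerivAt (fun s : ℝ => ∑' n : ℕ, s ^ (n + 1) / (((n : ℝ) + 1) * ((n + 1)! : ℝ)))
      (∑' n : ℕ, t ^ n / ((n + 1)! : ℝ)) t := by
  -- The termwise derivatives are dominated by `rⁿ / n!` only on bounded sets, so work on a ball.
  set r := |t| + 1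
  have hbound : ∀ (n : ℕ), ∀ s ∈ Metric.ball (0 : ℝ) r,
      ‖s ^ n / ((n + 1)! : ℝ)‖ ≤ r ^ n / n ! := by
    intro n s hs
    rw [mem_ball_zero_iff] at hs
    rw [norm_div, norm_pow, RCLike.norm_natCast]
    exact div_le_div₀ (by positivity) (pow_le_pow_left₀ (norm_nonneg s) hs.le n)
      (by positivity) (mod_cast factorial_le (le_succ n))
  exact hasDerivAt_tsum_of_isPreconnected (summable_pow_div_factorial r) Metric.isOpen_ball
    (convex_ball 0 r).isPreconnected
    (fun n s _ => hasDerivAt_pow_succ_div_succ_mul_factorial n s) hbound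
    (mem_ball_zero_iff.mpr (by simp [r])) (summable_abs_pow_succ_div_succ_mul_factorial t).of_abs
    (mem_ball_zero_iff.mpr (by simp [r]))

/-- The function `S(x) = ln(ln x) + ∑_{n=1}^∞ (ln x)^n/(n·n!)` is well defined on
`(1, ∞)` (the series converges absolutely for every `x > 1`) and is differentiable
there with derivative `S′(x) = 1/ln x`. -/
theorem gram_type_series_hasDerivAt :
    (∀ x : ℝ, 1 < x →
      Summable (fun n : ℕ =>
        |Real.log x ^ (n + 1) / (((n : ℝ) + 1) * (Nat.factorial (n + 1) : ℝ))|)) ∧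
    (∀ x : ℝ, 1 < x →
      HasDerivAt
        (fun y : ℝ =>
          Real.log (Real.log y) +
            ∑' n : ℕ, Real.log y ^ (n + 1) / (((n : ℝ) + 1) * (Nat.factorial (n + 1) : ℝ)))
        (1 / Real.log x) x) := by
  refine ⟨fun x _ => summable_abs_pow_succ_div_succ_mul_factorial (log x), fun x hx => ?_⟩
  have hx₀ : 0 < x := by linarith
  have hlogx : log x ≠ 0 := (log_pos hx).ne'
  have hlog := hasDerivAt_log hx₀.ne'
  have hloglog := (hasDerivAt_log hlogx).comp x hlog
  have hseries := (hasDerivAt_tsum_pow_succ_div_succ_mul_factorial (log x)).comp x hlog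
  rw [(hasSum_pow_div_factorial_succ hlogx).tsum_eq, exp_log hx₀] at hseries
  refine (hloglog.add hseries).congr_deriv ?_
  field_simp
  ring
end

section
/- For every positive integer N, the logarithmic integral satisfies the asymptotic expansion Li(x) = ∑_{k=1}^{N} (k−1)!·x/(ln x)^k + O( x/(ln x)^{N+1} ) as x → ∞; that is, the function x ↦ Li(x) − ∑_{k=1}^{N} (k−1)!·x/(ln x)^k is O(x/(ln x)^{N+1}) as x → ∞. -/
/-!
Integrating by parts against `d(t / (log t)^k)` gives
`∫ₐˣ dt/(log t)^k = x/(log x)^k − a/(log a)^k + k ∫ₐˣ dt/(log t)^(k+1)`, and iterating this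
`N` times produces the expansion with remainder `N! ∫₂ˣ dt/(log t)^(N+1)` plus a constant.
The remainder is bounded by feeding the same identity back into itself: once `log t ≥ 2m`,
the term `m ∫ dt/(log t)^(m+1)` is at most half of `∫ dt/(log t)^m`, so the latter is at most
`2x/(log x)^m`.
-/

open Real Filter Asymptotics intervalIntegral
open scoped Nat

lemma const_isBigO_div_log_pow (c : ℝ) (m : ℕ) :
    (fun _ : ℝ => c) =O[atTop] fun x => x / log x ^ m := by
  have h : (fun x => log x ^ m * (log x ^ m)⁻¹) =O[atTop] fun x => id x * (log x ^ m)⁻¹ :=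
    isLittleO_pow_log_id_atTop.isBigO.mul (isBigO_refl _ _)
  refine (isBigO_const_one ℝ c atTop).trans
    (h.congr' ?_ (.of_forall fun x => (div_eq_mul_inv x _).symm))
  filter_upwards [eventually_gt_atTop 1] with x hx
  exact mul_inv_cancel₀ (pow_ne_zero m (log_pos hx).ne')

lemma hasDerivAt_div_log_pow (k : ℕ) {t : ℝ} (ht : log t ≠ 0) :
    HasDerivAt (fun y => y / log y ^ k) (1 / log t ^ k - k * (1 / log t ^ (k + 1))) t := by
  have ht0 : t ≠ 0 := by rintro rfl; simp at ht
  refine ((hasDerivAt_id' t).fun_div ((hasDerivAt_log ht0).fun_pow k)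
    (pow_ne_zero k ht)).congr_deriv ?_
  rcases k with _ | k
  · simp
  · rw [Nat.add_sub_cancel]
    field_simp
    ring

lemma intervalIntegrable_one_div_log_pow (k : ℕ) {a b : ℝ} (ha : 1 < a) (hb : 1 < b) :
    IntervalIntegrable (fun t => 1 / log t ^ k) MeasureTheory.volume a b := by
  refine ContinuousOn.intervalIntegrable fun t ht => ?_
  have ht1 : 1 < t := (lt_min ha hb).trans_le ht.1
  exact (continuousAt_const.div ((continuousAt_log (by positivity)).pow k)
    (pow_ne_zero k (log_pos ht1).ne')).continuousWithinAt

lemma integral_one_div_log_pow_eq (k : ℕ) {a x : ℝ} (ha : 1 < a) (hx : 1 < x) :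
    ∫ t in a..x, 1 / log t ^ k =
      x / log x ^ k - a / log a ^ k + k * ∫ t in a..x, 1 / log t ^ (k + 1) := by
  have hint_k := intervalIntegrable_one_div_log_pow k ha hx
  have hint_succ := (intervalIntegrable_one_div_log_pow (k + 1) ha hx).const_mul (k : ℝ)
  have hftc := integral_eq_sub_of_hasDerivAt
    (fun t ht => hasDerivAt_div_log_pow k (log_pos ((lt_min ha hx).trans_le ht.1)).ne')
    (hint_k.sub hint_succ)
  rw [integral_sub hint_k hint_succ, integral_const_mul] at hftc
  linarith

lemma integral_one_div_log_pow_le (m : ℕ) {a x : ℝ} (ha : 1 < a) (hm : 2 * m ≤ log a)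
    (hax : a ≤ x) : ∫ t in a..x, 1 / log t ^ m ≤ 2 * (x / log x ^ m) := by
  have hx : 1 < x := ha.trans_le hax
  have hhalf : m * ∫ t in a..x, 1 / log t ^ (m + 1) ≤ (∫ t in a..x, 1 / log t ^ m) / 2 := by
    rw [← integral_const_mul, ← intervalIntegral.integral_div]
    refine integral_mono_on hax ((intervalIntegrable_one_div_log_pow _ ha hx).const_mul _)
      ((intervalIntegrable_one_div_log_pow _ ha hx).div_const _) fun t ht => ?_
    have hlog : 2 * m ≤ log t := hm.trans (log_le_log (by linarith) ht.1)
    have hpos : 0 < log t := log_pos (ha.trans_le ht.1)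
    rw [pow_succ]
    field_simp
    nlinarith [pow_pos hpos m]
  have hpos : 0 ≤ a / log a ^ m := by have := log_pos ha; positivity
  linarith [integral_one_div_log_pow_eq m ha hx]

lemma isBigO_integral_one_div_log_pow (m : ℕ) {c : ℝ} (hc : 1 < c) :
    (fun x => ∫ t in c..x, 1 / log t ^ m) =O[atTop] fun x => x / log x ^ m := by
  set a := exp (2 * m + 1)
  have ha : 1 < a := one_lt_exp_iff.2 (by positivity)
  have hm : 2 * m ≤ log a := by rw [log_exp]; linarith
  have htail : (fun x => ∫ t in a..x, 1 / log t ^ m) =O[atTop] fun x => x / log x ^ m := by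
    refine IsBigO.of_bound 2 ?_
    filter_upwards [eventually_ge_atTop a] with x hax
    have hx : 1 < x := ha.trans_le hax
    have hlogx : 0 < log x := log_pos hx
    rw [norm_of_nonneg (integral_nonneg hax fun t ht => by
        have := log_pos (ha.trans_le ht.1); positivity),
      norm_of_nonneg (by positivity : 0 ≤ x / log x ^ m)]
    exact integral_one_div_log_pow_le m ha hm hax
  refine ((const_isBigO_div_log_pow (∫ t in c..a, 1 / log t ^ m) m).add htail).congr' ?_
    EventuallyEq.rfl
  filter_upwards [eventually_gt_atTop 1] with x hx
  exact integral_add_adjacent_intervals (intervalIntegrable_one_div_log_pow m hc ha)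
    (intervalIntegrable_one_div_log_pow m ha hx)

lemma integral_one_div_log_sub_sum_eq (N : ℕ) {a x : ℝ} (ha : 1 < a) (hx : 1 < x) :
    (∫ t in a..x, 1 / log t) - ∑ k ∈ Finset.Icc 1 N, ((k - 1)! : ℝ) * x / log x ^ k =
      N ! * (∫ t in a..x, 1 / log t ^ (N + 1)) -
        ∑ k ∈ Finset.Icc 1 N, ((k - 1)! : ℝ) * a / log a ^ k := by
  induction N with
  | zero => simp
  | succ N ih =>
    rw [Finset.sum_Icc_succ_top (Nat.le_add_left 1 N), Finset.sum_Icc_succ_top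
      (Nat.le_add_left 1 N), Nat.add_sub_cancel, ← sub_sub, ih,
      integral_one_div_log_pow_eq (N + 1) ha hx, Nat.factorial_succ]
    push_cast
    ring

theorem li_asymptotic_expansion_general (N : ℕ) :
    (fun x : ℝ =>
        (∫ t in (2 : ℝ)..x, 1 / Real.log t) -
          ∑ k ∈ Finset.Icc 1 N, (Nat.factorial (k - 1) : ℝ) * x / Real.log x ^ k)
      =O[atTop] (fun x : ℝ => x / Real.log x ^ (N + 1)) := by
  have hremainder := ((isBigO_integral_one_div_log_pow (N + 1) one_lt_two).const_mul_left
    (N ! : ℝ)).sub (const_isBigO_div_log_pow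
      (∑ k ∈ Finset.Icc 1 N, ((k - 1)! : ℝ) * 2 / log 2 ^ k) (N + 1))
  refine hremainder.congr' ?_ EventuallyEq.rfl
  filter_upwards [eventually_gt_atTop 1] with x hx
  exact (integral_one_div_log_sub_sum_eq N one_lt_two hx).symm

/-- For every positive integer `N`, the logarithmic integral `Li(x) = ∫₂ˣ dt/ln t`
satisfies the asymptotic expansion
`Li(x) = ∑_{k=1}^N (k-1)!·x/(ln x)^k + O(x/(ln x)^{N+1})` as `x → ∞`. -/
theorem li_asymptotic_expansion (N : ℕ) (hN : 0 < N) :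
    (fun x : ℝ =>
        (∫ t in (2 : ℝ)..x, 1 / Real.log t) -
          ∑ k ∈ Finset.Icc 1 N, (Nat.factorial (k - 1) : ℝ) * x / Real.log x ^ k)
      =O[atTop] (fun x : ℝ => x / Real.log x ^ (N + 1)) :=
  li_asymptotic_expansion_general N
end

section
/- Let x be real, L > 0, n a positive integer, and let e₁ < e₂ < ⋯ < e_n be real numbers with x < e_k < x + L for all k. Let N(t) = #{ k : e_k ≤ t } be the counting staircase and set ẽ_k = e_k − (x + L/2). Then the minimum over all (a, b) ∈ ℝ² of (1/L)·∫₀^L ( N(x + ε) − a·ε − b )² dε is attained and equals n²/16 − (1/L²)·( ∑_{k=1}^{n} ẽ_k )² + (3n/(2L²))·∑_{k=1}^{n} ẽ_k² − (3/L⁴)·( ∑_{k=1}^{n} ẽ_k² )² + (1/L)·∑_{k=1}^{n} (n − 2k + 1)·ẽ_k. -/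
/-!
With `u = ε - L/2`, the functions `1` and `u` are orthogonal on `[0, L]`, so completing the
square shows that for any square-integrable `N` the least value of
`(1/L) ∫₀ᴸ (N - aε - b)²` is `(1/L) (∫N² - (∫N)²/L - (12/L³) (∫uN)²)`.
For the staircase, `N(x + ε) = ∑ₖ 1[ε ≥ e_k - x]`, and since the levels are increasing,
`N² = ∑ₖ (2k + 1) 1[ε ≥ e_k - x]` (`k` counted from `0`). Hence the three moments are sums of
integrals of polynomials over `[e_k - x, L]`:
`∫N = nL/2 - ∑ ẽ_k`, `∫uN = nL²/8 - ∑ ẽ_k²/2` and `∫N² = n²L/2 - ∑ (2k + 1) ẽ_k`.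
-/

open MeasureTheory Finset

theorem Finset.sum_range_two_mul_add_one (m : ℕ) : ∑ j ∈ range m, (2 * j + 1) = m ^ 2 := by
  induction m with
  | zero => rfl
  | succ m ih => rw [sum_range_succ, ih]; ring

section CountingFunction

variable {α : Type*} [Preorder α] [DecidableLE α] {n : ℕ} {e : Fin n → α}

theorem Monotone.le_iff_lt_card_filter_le (he : Monotone e) (t : α) (k : Fin n) :
    e k ≤ t ↔ (k : ℕ) < #{j | e j ≤ t} := by
  constructor
  · intro hk
    have hsub : Iic k ⊆ ({j | e j ≤ t} : Finset (Fin n)) := fun j hj => by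
      simpa using (he (mem_Iic.mp hj)).trans hk
    simpa using card_le_card hsub
  · intro hk
    by_contra hkt
    have hsub : ({j | e j ≤ t} : Finset (Fin n)) ⊆ Iio k := fun j hj => by
      simp only [mem_filter, mem_univ, true_and] at hj
      exact mem_Iio.mpr (lt_of_not_ge fun hkj => hkt ((he hkj).trans hj))
    simpa using (card_le_card hsub).trans_lt' hk

theorem Monotone.card_filter_le_sq (he : Monotone e) (t : α) :
    #{k | e k ≤ t} ^ 2 = ∑ k : Fin n, if e k ≤ t then 2 * (k : ℕ) + 1 else 0 := by
  set m := #{k | e k ≤ t}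
  have hmn : m ≤ n := by simpa using card_filter_le univ fun k => e k ≤ t
  calc m ^ 2 = ∑ j ∈ range m, (2 * j + 1) := (sum_range_two_mul_add_one m).symm
    _ = ∑ j ∈ range n, if j < m then 2 * j + 1 else 0 := by
      rw [← sum_filter]
      congr 1
      ext j
      simp only [mem_filter, mem_range]
      omega
    _ = ∑ k : Fin n, if e k ≤ t then 2 * (k : ℕ) + 1 else 0 := by
      rw [← Fin.sum_univ_eq_sum_range (fun j => if j < m then 2 * j + 1 else 0)]
      exact sum_congr rfl fun k _ => if_congr (he.le_iff_lt_card_filter_le t k).symm rfl rfl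

end CountingFunction

theorem intervalIntegral.integral_indicator_Ici {f : ℝ → ℝ} {d L : ℝ} (hd : d ∈ Set.Ioc 0 L) :
    ∫ ε in 0..L, (Set.Ici d).indicator f ε = ∫ ε in d..L, f ε := by
  have hinter : Set.Ici d ∩ Set.Ioc 0 L = Set.Icc d L := by
    ext ε
    simp only [Set.mem_inter_iff, Set.mem_Ici, Set.mem_Ioc, Set.mem_Icc]
    constructor
    · rintro ⟨h1, -, h3⟩; exact ⟨h1, h3⟩
    · rintro ⟨h1, h2⟩; exact ⟨h1, hd.1.trans_le h1, h2⟩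
  rw [intervalIntegral.integral_of_le (hd.1.le.trans hd.2), intervalIntegral.integral_of_le hd.2,
    MeasureTheory.integral_indicator measurableSet_Ici, Measure.restrict_restrict measurableSet_Ici,
    hinter, integral_Icc_eq_integral_Ioc]

theorem intervalIntegral.integral_sum_ite_le_mul {ι : Type*} [Fintype ι] {d w : ι → ℝ}
    {φ : ℝ → ℝ} {L : ℝ} (hd : ∀ k, d k ∈ Set.Ioc 0 L) (hφ : Continuous φ) :
    ∫ ε in 0..L, (∑ k, if d k ≤ ε then w k else 0) * φ ε = ∑ k, w k * ∫ ε in d k..L, φ ε := by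
  have hterm : ∀ ε, (∑ k, if d k ≤ ε then w k else 0) * φ ε
      = ∑ k, (Set.Ici (d k)).indicator (fun ε => w k * φ ε) ε := fun ε => by
    simp only [sum_mul, Set.indicator_apply, Set.mem_Ici, ite_mul, zero_mul]
  have hint : ∀ k, IntervalIntegrable ((Set.Ici (d k)).indicator fun ε => w k * φ ε) volume 0 L :=
    fun k => by
      have := ((continuous_const (y := w k)).mul hφ).intervalIntegrable (μ := volume) 0 L
      rw [intervalIntegrable_iff] at this ⊢
      exact this.indicator measurableSet_Ici
  simp only [hterm, intervalIntegral.integral_finsetSum fun k _ => hint k,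
    intervalIntegral.integral_indicator_Ici (hd _), intervalIntegral.integral_const_mul]

theorem integral_mul_sub_half_add_sq (a c L : ℝ) :
    ∫ ε in (0 : ℝ)..L, (a * (ε - L / 2) + c) ^ 2 = L ^ 3 / 12 * a ^ 2 + L * c ^ 2 := by
  have hexpand : ∀ u : ℝ, (a * u + c) ^ 2 = a ^ 2 * u ^ 2 + (2 * a * c) * u + c ^ 2 :=
    fun u => by ring
  rw [intervalIntegral.integral_comp_sub_right (fun u => (a * u + c) ^ 2)]
  simp only [hexpand]
  rw [intervalIntegral.integral_add ((by fun_prop : Continuous _).intervalIntegrable _ _)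
      ((by fun_prop : Continuous _).intervalIntegrable _ _),
    intervalIntegral.integral_add ((by fun_prop : Continuous _).intervalIntegrable _ _)
      ((by fun_prop : Continuous _).intervalIntegrable _ _),
    intervalIntegral.integral_const_mul, intervalIntegral.integral_const_mul, integral_id,
    integral_pow, intervalIntegral.integral_const, smul_eq_mul]
  ring

section LeastSquares

variable {g : ℝ → ℝ} {L : ℝ}

theorem integral_sub_linear_sq (hL : L ≠ 0) (hg : IntervalIntegrable g volume 0 L)
    (hg2 : IntervalIntegrable (fun ε => g ε ^ 2) volume 0 L) (a b : ℝ) :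
    ∫ ε in 0..L, (g ε - a * ε - b) ^ 2
      = (∫ ε in 0..L, g ε ^ 2) - (∫ ε in 0..L, g ε) ^ 2 / L
        - 12 / L ^ 3 * (∫ ε in 0..L, (ε - L / 2) * g ε) ^ 2
        + L ^ 3 / 12 * (a - 12 / L ^ 3 * ∫ ε in 0..L, (ε - L / 2) * g ε) ^ 2
        + L * (b + a * L / 2 - (∫ ε in 0..L, g ε) / L) ^ 2 := by
  have hexpand : ∀ ε, (g ε - a * ε - b) ^ 2 = g ε ^ 2
      - 2 * (a * ((ε - L / 2) * g ε) + (b + a * L / 2) * g ε)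
      + (a * (ε - L / 2) + (b + a * L / 2)) ^ 2 := fun ε => by ring
  have hcg : IntervalIntegrable (fun ε => (ε - L / 2) * g ε) volume 0 L :=
    hg.continuousOn_mul (by fun_prop)
  have hcross := (hcg.const_mul a).add (hg.const_mul (b + a * L / 2))
  simp only [hexpand]
  rw [intervalIntegral.integral_add (hg2.sub (hcross.const_mul 2))
      ((by fun_prop : Continuous _).intervalIntegrable _ _),
    intervalIntegral.integral_sub hg2 (hcross.const_mul 2),
    intervalIntegral.integral_const_mul, intervalIntegral.integral_add (hcg.const_mul a)
      (hg.const_mul _),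
    intervalIntegral.integral_const_mul, intervalIntegral.integral_const_mul,
    integral_mul_sub_half_add_sq]
  field_simp
  ring

theorem isLeast_integral_sub_linear_sq (hL : 0 < L) (hg : IntervalIntegrable g volume 0 L)
    (hg2 : IntervalIntegrable (fun ε => g ε ^ 2) volume 0 L) :
    IsLeast {v | ∃ a b : ℝ, v = (1 / L) * ∫ ε in 0..L, (g ε - a * ε - b) ^ 2}
      ((1 / L) * ((∫ ε in 0..L, g ε ^ 2) - (∫ ε in 0..L, g ε) ^ 2 / L
        - 12 / L ^ 3 * (∫ ε in 0..L, (ε - L / 2) * g ε) ^ 2)) := by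
  simp only [integral_sub_linear_sq hL.ne' hg hg2]
  constructor
  · set a := 12 / L ^ 3 * ∫ ε in 0..L, (ε - L / 2) * g ε
    refine ⟨a, (∫ ε in 0..L, g ε) / L - a * L / 2, ?_⟩
    ring
  · rintro _ ⟨a, b, rfl⟩
    gcongr
    rw [add_assoc]
    exact le_add_of_nonneg_right <| add_nonneg
      (mul_nonneg (div_nonneg (pow_nonneg hL.le 3) (by norm_num)) (sq_nonneg _))
      (mul_nonneg hL.le (sq_nonneg _))

end LeastSquares

section Staircase

variable {n : ℕ} {e : Fin n → ℝ} {x L : ℝ}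

theorem monotone_card_filter_le_add : Monotone fun ε => (#{k | e k ≤ x + ε} : ℝ) :=
  fun s t hst => by dsimp only; gcongr

theorem card_filter_le_add_eq_sum_ite (ε : ℝ) :
    (#{k | e k ≤ x + ε} : ℝ) = ∑ k, if e k - x ≤ ε then 1 else 0 := by
  simp only [card_filter, sub_le_iff_le_add']
  push_cast
  rfl

theorem Monotone.card_filter_le_add_sq_eq_sum_ite (he : Monotone e) (ε : ℝ) :
    (#{k | e k ≤ x + ε} : ℝ) ^ 2 = ∑ k, if e k - x ≤ ε then (2 * (k : ℕ) + 1 : ℝ) else 0 := by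
  simp only [sub_le_iff_le_add']
  exact_mod_cast he.card_filter_le_sq (x + ε)

theorem integral_card_filter_le_add (hd : ∀ k, e k - x ∈ Set.Ioc 0 L) :
    ∫ ε in 0..L, (#{k | e k ≤ x + ε} : ℝ) = n * L / 2 - ∑ k, (e k - (x + L / 2)) := by
  calc ∫ ε in 0..L, (#{k | e k ≤ x + ε} : ℝ)
        = ∫ ε in 0..L, (∑ k, if e k - x ≤ ε then 1 else 0) * 1 := by
        simp only [card_filter_le_add_eq_sum_ite, mul_one]
    _ = ∑ k, 1 * ∫ ε in e k - x..L, 1 :=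
        intervalIntegral.integral_sum_ite_le_mul hd continuous_const
    _ = ∑ k, (L / 2 - (e k - (x + L / 2))) := sum_congr rfl fun k _ => by
        rw [one_mul, intervalIntegral.integral_const, smul_eq_mul, mul_one]; ring
    _ = _ := by
        simp only [sum_sub_distrib, sum_const, card_univ, Fintype.card_fin, nsmul_eq_mul]; ring

theorem integral_sub_half_mul_card_filter_le_add (hd : ∀ k, e k - x ∈ Set.Ioc 0 L) :
    ∫ ε in 0..L, (ε - L / 2) * #{k | e k ≤ x + ε}
      = n * L ^ 2 / 8 - (∑ k, (e k - (x + L / 2)) ^ 2) / 2 := by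
  calc ∫ ε in 0..L, (ε - L / 2) * #{k | e k ≤ x + ε}
        = ∫ ε in 0..L, (∑ k, if e k - x ≤ ε then 1 else 0) * (ε - L / 2) := by
        simp only [card_filter_le_add_eq_sum_ite, mul_comm]
    _ = ∑ k, 1 * ∫ ε in e k - x..L, (ε - L / 2) :=
        intervalIntegral.integral_sum_ite_le_mul hd (by fun_prop)
    _ = ∑ k, (L ^ 2 / 8 - (e k - (x + L / 2)) ^ 2 / 2) := sum_congr rfl fun k _ => by
        rw [one_mul, intervalIntegral.integral_comp_sub_right (fun u => u), integral_id]; ring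
    _ = _ := by
        simp only [sum_sub_distrib, sum_const, card_univ, Fintype.card_fin, nsmul_eq_mul, sum_div]
        ring

theorem Monotone.integral_card_filter_le_add_sq (he : Monotone e)
    (hd : ∀ k, e k - x ∈ Set.Ioc 0 L) :
    ∫ ε in 0..L, (#{k | e k ≤ x + ε} : ℝ) ^ 2
      = n ^ 2 * L / 2 - ∑ k : Fin n, (2 * (k : ℕ) + 1 : ℝ) * (e k - (x + L / 2)) := by
  have hodd : ∑ k : Fin n, (2 * (k : ℕ) + 1 : ℝ) = n ^ 2 := by
    exact_mod_cast (Fin.sum_univ_eq_sum_range (fun j => 2 * j + 1) n).trans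
      (sum_range_two_mul_add_one n)
  calc ∫ ε in 0..L, (#{k | e k ≤ x + ε} : ℝ) ^ 2
        = ∫ ε in 0..L, (∑ k, if e k - x ≤ ε then (2 * (k : ℕ) + 1 : ℝ) else 0) * 1 := by
        simp only [he.card_filter_le_add_sq_eq_sum_ite, mul_one]
    _ = ∑ k : Fin n, (2 * (k : ℕ) + 1 : ℝ) * ∫ ε in e k - x..L, 1 :=
        intervalIntegral.integral_sum_ite_le_mul hd continuous_const
    _ = ∑ k : Fin n,
          (L / 2 * (2 * (k : ℕ) + 1 : ℝ) - (2 * (k : ℕ) + 1 : ℝ) * (e k - (x + L / 2))) :=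
        sum_congr rfl fun k _ => by
          rw [intervalIntegral.integral_const, smul_eq_mul, mul_one]; ring
    _ = _ := by rw [sum_sub_distrib, ← mul_sum, hodd]; ring

end Staircase

theorem bohigas_giannoni_delta3_general (x L : ℝ) (hL : 0 < L) (n : ℕ)
    (e : Fin n → ℝ) (hmono : StrictMono e)
    (hbound : ∀ k : Fin n, x < e k ∧ e k < x + L) :
    IsLeast
      {v : ℝ | ∃ a b : ℝ,
        v = (1 / L) * ∫ ε in (0 : ℝ)..L,
          (((Finset.univ.filter (fun k : Fin n => e k ≤ x + ε)).card : ℝ) - a * ε - b) ^ 2}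
      ((n : ℝ) ^ 2 / 16
        - (1 / L ^ 2) * (∑ k : Fin n, (e k - (x + L / 2))) ^ 2
        + (3 * (n : ℝ) / (2 * L ^ 2)) * ∑ k : Fin n, (e k - (x + L / 2)) ^ 2
        - (3 / L ^ 4) * (∑ k : Fin n, (e k - (x + L / 2)) ^ 2) ^ 2
        + (1 / L) * ∑ k : Fin n, ((n : ℝ) - 2 * ((k : ℕ) + 1 : ℝ) + 1) * (e k - (x + L / 2))) := by
  have hd : ∀ k, e k - x ∈ Set.Ioc 0 L := fun k =>
    ⟨by linarith [hbound k], by linarith [hbound k]⟩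
  have hweights : ∑ k : Fin n, ((n : ℝ) - 2 * ((k : ℕ) + 1 : ℝ) + 1) * (e k - (x + L / 2))
      = n * ∑ k, (e k - (x + L / 2))
        - ∑ k : Fin n, (2 * (k : ℕ) + 1 : ℝ) * (e k - (x + L / 2)) := by
    rw [mul_sum, ← sum_sub_distrib]
    exact sum_congr rfl fun k _ => by ring
  have hN_sq_mono : Monotone fun ε => (#{k | e k ≤ x + ε} : ℝ) ^ 2 := fun s t hst =>
    pow_le_pow_left₀ (Nat.cast_nonneg _) (monotone_card_filter_le_add hst) 2
  convert isLeast_integral_sub_linear_sq hL monotone_card_filter_le_add.intervalIntegrable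
    hN_sq_mono.intervalIntegrable using 1
  rw [integral_card_filter_le_add hd, integral_sub_half_mul_card_filter_le_add hd,
    hmono.monotone.integral_card_filter_le_add_sq hd, hweights]
  generalize ∑ k, (e k - (x + L / 2)) = S₁
  generalize ∑ k, (e k - (x + L / 2)) ^ 2 = S₂
  generalize ∑ k : Fin n, (2 * (k : ℕ) + 1 : ℝ) * (e k - (x + L / 2)) = K
  field_simp
  ring

/-- Bohigas–Giannoni explicit formula for the spectral rigidity `Δ₃`.
Let `L > 0`, let `e₁ < e₂ < ⋯ < e_n` be levels with `x < e_k < x + L`, let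
`N(t) = #{k : e_k ≤ t}` be the counting staircase and `ẽ_k = e_k - (x + L/2)`.
Then the minimum over `(a, b) ∈ ℝ²` of `(1/L)·∫₀ᴸ (N(x+ε) - aε - b)² dε` is attained
and equals
`n²/16 - (1/L²)(∑ ẽ_k)² + (3n/(2L²))·∑ ẽ_k² - (3/L⁴)(∑ ẽ_k²)² + (1/L)·∑ (n - 2k + 1)·ẽ_k`. -/
theorem bohigas_giannoni_delta3 (x L : ℝ) (hL : 0 < L) (n : ℕ) (hn : 0 < n)
    (e : Fin n → ℝ) (hmono : StrictMono e)
    (hbound : ∀ k : Fin n, x < e k ∧ e k < x + L) :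
    IsLeast
      {v : ℝ | ∃ a b : ℝ,
        v = (1 / L) * ∫ ε in (0 : ℝ)..L,
          (((Finset.univ.filter (fun k : Fin n => e k ≤ x + ε)).card : ℝ) - a * ε - b) ^ 2}
      ((n : ℝ) ^ 2 / 16
        - (1 / L ^ 2) * (∑ k : Fin n, (e k - (x + L / 2))) ^ 2
        + (3 * (n : ℝ) / (2 * L ^ 2)) * ∑ k : Fin n, (e k - (x + L / 2)) ^ 2
        - (3 / L ^ 4) * (∑ k : Fin n, (e k - (x + L / 2)) ^ 2) ^ 2
        + (1 / L) * ∑ k : Fin n, ((n : ℝ) - 2 * ((k : ℕ) + 1 : ℝ) + 1) * (e k - (x + L / 2))) :=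
  bohigas_giannoni_delta3_general x L hL n e hmono hbound
end
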